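/- Consider the regularized Frank–Wolfe iteration for min_{X∈S_n} f(X) with f convex and β-smooth: given step size η = δ̂/(2β) with 0 < δ̂ ≤ δ, at iterate X_t set v_t = argmin_{‖v‖=1} ⟨vvᵀ, ∇f(X_t)⟩ + (ηβ/2)‖vvᵀ − X_t‖_F², and X_{t+1} = (1−η)X_t + η v_t v_tᵀ. If the eigen-gap assumption holds with gap δ > 0 at the optimum X*, then for all t ≥ 1, f(X_{t+1}) − f* ≤ (1 − δ̂/(4β))(f(X_t) − f*). -/

import Mathlib

open Matrix
open scoped RealInnerProductSpace

noncomputable section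

/-- Trace (Frobenius) inner product on real square matrices. -/
def tinner {n : ℕ} (A B : Matrix (Fin n) (Fin n) ℝ) : ℝ := ∑ i, ∑ j, A i j * B i j

/-- Squared Frobenius norm. -/
def frobSq {n : ℕ} (A : Matrix (Fin n) (Fin n) ℝ) : ℝ := ∑ i, ∑ j, (A i j)^2

/-- Frobenius norm. -/
def frobNorm {n : ℕ} (A : Matrix (Fin n) (Fin n) ℝ) : ℝ := Real.sqrt (frobSq A)

/-- The spectrahedron: positive semidefinite matrices with unit trace. -/
def Spectra (n : ℕ) : Set (Matrix (Fin n) (Fin n) ℝ) :=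
  {X | X.PosSemidef ∧ X.trace = 1}

/-- Eigenvalues of a symmetric matrix sorted in non-decreasing order, so that
`sortedEigs hA 0` is the smallest eigenvalue (λ_n in the paper's non-increasing
convention), `sortedEigs hA 1` is the second smallest (λ_{n-1}), and in general
`sortedEigs hA i = λ_{n-i}`. -/
def sortedEigs {n : ℕ} {A : Matrix (Fin n) (Fin n) ℝ} (hA : A.IsHermitian) : Fin n → ℝ :=
  hA.eigenvalues ∘ Tuple.sort hA.eigenvalues

/-!
Write `G = ∇f(X*)` and let `w` be a unit eigenvector for its smallest eigenvalue `λ_n`. Expanding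
`⟨G, X⟩` in an eigenbasis of `G` gives `⟨G, X⟩ ≥ λ_n + δ (1 - wᵀ X w)` on the spectrahedron.
First-order optimality `⟨G, X - X*⟩ ≥ 0` then forces `X* = w wᵀ`, and because
`‖w wᵀ - X‖_F² ≤ 2 (1 - wᵀ X w)` we get `⟨G, X - X*⟩ ≥ (δ/2) ‖X - X*‖_F²`, i.e. quadratic growth.
The regularized step is at least as good as moving towards `X* = w wᵀ`, so by smoothness and
convexity `f(X_{t+1}) ≤ f(X_t) + η (f* - f(X_t)) + η² β/2 ‖X* - X_t‖_F²`, and with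
`ηβ = δ̂/2 ≤ δ/2` quadratic growth bounds the last term by `(η/2) (f(X_t) - f*)`.
-/

section Frobenius

variable {n : ℕ}

lemma tinner_comm (A B : Matrix (Fin n) (Fin n) ℝ) : tinner A B = tinner B A := by
  simp only [tinner, mul_comm]

lemma tinner_sub_right (A B C : Matrix (Fin n) (Fin n) ℝ) :
    tinner A (B - C) = tinner A B - tinner A C := by
  simp [tinner, mul_sub, Finset.sum_sub_distrib]

lemma tinner_smul_right (c : ℝ) (A B : Matrix (Fin n) (Fin n) ℝ) :
    tinner A (c • B) = c * tinner A B := by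
  simp [tinner, Finset.mul_sum, mul_left_comm]

lemma tinner_eq_trace (A B : Matrix (Fin n) (Fin n) ℝ) : tinner A B = (Aᵀ * B).trace := by
  simp only [tinner, trace, diag, mul_apply, transpose_apply]
  exact Finset.sum_comm

lemma tinner_vecMulVec_right (A : Matrix (Fin n) (Fin n) ℝ) (u : Fin n → ℝ) :
    tinner A (vecMulVec u u) = u ⬝ᵥ A *ᵥ u := by
  simp only [tinner, vecMulVec_apply, dotProduct, mulVec, Finset.mul_sum]
  exact Finset.sum_congr rfl fun i _ => Finset.sum_congr rfl fun j _ => by ring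

lemma frobSq_eq_tinner (A : Matrix (Fin n) (Fin n) ℝ) : frobSq A = tinner A A := by
  simp only [frobSq, tinner, sq]

lemma frobSq_nonneg (A : Matrix (Fin n) (Fin n) ℝ) : 0 ≤ frobSq A := by
  unfold frobSq; positivity

lemma frobSq_eq_zero_iff {A : Matrix (Fin n) (Fin n) ℝ} : frobSq A = 0 ↔ A = 0 := by
  simp [frobSq, Finset.sum_eq_zero_iff_of_nonneg, Finset.sum_nonneg, sq_nonneg,
    ← Matrix.ext_iff]

lemma frobSq_smul (c : ℝ) (A : Matrix (Fin n) (Fin n) ℝ) :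
    frobSq (c • A) = c ^ 2 * frobSq A := by
  simp [frobSq, Finset.mul_sum, mul_pow]

lemma frobSq_sub (A B : Matrix (Fin n) (Fin n) ℝ) :
    frobSq (A - B) = frobSq A - 2 * tinner A B + frobSq B := by
  simp only [frobSq, tinner, Matrix.sub_apply, Finset.mul_sum, ← Finset.sum_add_distrib,
    ← Finset.sum_sub_distrib]
  exact Finset.sum_congr rfl fun i _ => Finset.sum_congr rfl fun j _ => by ring

lemma frobSq_vecMulVec (u : Fin n → ℝ) : frobSq (vecMulVec u u) = (u ⬝ᵥ u) ^ 2 := by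
  simp only [frobSq, vecMulVec_apply, dotProduct, sq, Finset.sum_mul_sum]
  exact Finset.sum_congr rfl fun i _ => Finset.sum_congr rfl fun j _ => by ring

end Frobenius

section Spectral

lemma trace_eq_sum_dotProduct_mulVec {m : Type*} [Fintype m] [DecidableEq m]
    (b : OrthonormalBasis m ℝ (EuclideanSpace ℝ m)) (M : Matrix m m ℝ) :
    M.trace = ∑ i, ⇑(b i) ⬝ᵥ M *ᵥ ⇑(b i) := by
  rw [← trace_toLin_eq M (EuclideanSpace.basisFun m ℝ).toBasis,
    ← toEuclideanLin_eq_toLin_orthonormal, LinearMap.trace_eq_sum_inner _ b]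
  refine Finset.sum_congr rfl fun i _ => ?_
  simp [EuclideanSpace.inner_eq_star_dotProduct, dotProduct_comm]

lemma OrthonormalBasis.dotProduct_self {m : Type*} [Fintype m]
    (b : OrthonormalBasis m ℝ (EuclideanSpace ℝ m)) (i : m) : ⇑(b i) ⬝ᵥ ⇑(b i) = 1 := by
  have h := real_inner_self_eq_norm_sq (b i)
  rw [b.orthonormal.1 i, EuclideanSpace.inner_eq_star_dotProduct] at h
  simpa using h

variable {n : ℕ}

lemma tinner_eq_sum_eigenvalues_mul {A : Matrix (Fin n) (Fin n) ℝ} (hA : A.IsHermitian)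
    (X : Matrix (Fin n) (Fin n) ℝ) :
    tinner A X = ∑ i, hA.eigenvalues i *
      (⇑(hA.eigenvectorBasis i) ⬝ᵥ X *ᵥ ⇑(hA.eigenvectorBasis i)) := by
  have hAt : Aᵀ = A := by simpa [conjTranspose_eq_transpose_of_trivial] using hA.eq
  rw [tinner_eq_trace, hAt, trace_mul_comm, trace_eq_sum_dotProduct_mulVec hA.eigenvectorBasis]
  refine Finset.sum_congr rfl fun i _ => ?_
  rw [← mulVec_mulVec, hA.mulVec_eigenvectorBasis, mulVec_smul, dotProduct_smul, smul_eq_mul]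

lemma frobSq_le_one_of_mem_spectra {X : Matrix (Fin n) (Fin n) ℝ} (hX : X ∈ Spectra n) :
    frobSq X ≤ 1 := by
  have hH := hX.1.isHermitian
  have hquad (i) :
      ⇑(hH.eigenvectorBasis i) ⬝ᵥ X *ᵥ ⇑(hH.eigenvectorBasis i) = hH.eigenvalues i := by
    rw [hH.mulVec_eigenvectorBasis, dotProduct_smul, OrthonormalBasis.dotProduct_self,
      smul_eq_mul, mul_one]
  have hsum : ∑ i, hH.eigenvalues i = 1 := by
    simpa [hX.2] using hH.trace_eq_sum_eigenvalues.symm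
  calc frobSq X = ∑ i, hH.eigenvalues i ^ 2 := by
        simp only [frobSq_eq_tinner, tinner_eq_sum_eigenvalues_mul hH, hquad, sq]
    _ ≤ (∑ i, hH.eigenvalues i) ^ 2 :=
        Finset.sum_sq_le_sq_sum_of_nonneg fun i _ => hX.1.eigenvalues_nonneg i
    _ = 1 := by rw [hsum, one_pow]

lemma vecMulVec_mem_spectra {u : Fin n → ℝ} (hu : u ⬝ᵥ u = 1) : vecMulVec u u ∈ Spectra n :=
  ⟨by simpa using posSemidef_vecMulVec_self_star u, by rw [trace_vecMulVec, hu]⟩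

lemma frobSq_vecMulVec_sub_le {X : Matrix (Fin n) (Fin n) ℝ} (hX : X ∈ Spectra n)
    {u : Fin n → ℝ} (hu : u ⬝ᵥ u = 1) :
    frobSq (vecMulVec u u - X) ≤ 2 * (1 - u ⬝ᵥ X *ᵥ u) := by
  rw [frobSq_sub, frobSq_vecMulVec, hu, tinner_comm, tinner_vecMulVec_right]
  linarith [frobSq_le_one_of_mem_spectra hX]

lemma convex_spectra : Convex ℝ (Spectra n) := by
  intro X hX Y hY a b ha hb hab
  refine ⟨(hX.1.smul ha).add (hY.1.smul hb), ?_⟩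
  rw [trace_add, trace_smul, trace_smul, hX.2, hY.2, smul_eq_mul, smul_eq_mul, mul_one, mul_one,
    hab]

end Spectral

lemma add_mul_one_sub_le_sum_mul {ι : Type*} [Fintype ι]
    {p μ : ι → ℝ} {i₀ : ι} {δ : ℝ} (hp : ∀ i, 0 ≤ p i) (hsum : ∑ i, p i = 1)
    (hμ : ∀ i, i ≠ i₀ → μ i₀ + δ ≤ μ i) :
    μ i₀ + δ * (1 - p i₀) ≤ ∑ i, μ i * p i := by
  classical
  have hlhs : μ i₀ + δ * (1 - p i₀) = ∑ i, (μ i₀ + δ - if i = i₀ then δ else 0) * p i := by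
    simp only [sub_mul, ite_mul, zero_mul, Finset.sum_sub_distrib, ← Finset.mul_sum, hsum,
      Finset.sum_ite_eq', Finset.mem_univ, if_true]
    ring
  rw [hlhs]
  refine Finset.sum_le_sum fun i _ => mul_le_mul_of_nonneg_right ?_ (hp i)
  split_ifs with h
  · rw [h]; linarith
  · linarith [hμ i h]

section BottomEigenvector

variable {n : ℕ} [NeZero n] {A : Matrix (Fin n) (Fin n) ℝ}

def bottomEigenvector (hA : A.IsHermitian) : Fin n → ℝ :=
  ⇑(hA.eigenvectorBasis (Tuple.sort hA.eigenvalues 0))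

lemma bottomEigenvector_dotProduct_self (hA : A.IsHermitian) :
    bottomEigenvector hA ⬝ᵥ bottomEigenvector hA = 1 :=
  OrthonormalBasis.dotProduct_self _ _

lemma tinner_vecMulVec_bottomEigenvector (hA : A.IsHermitian) :
    tinner A (vecMulVec (bottomEigenvector hA) (bottomEigenvector hA)) = sortedEigs hA 0 := by
  rw [tinner_vecMulVec_right, bottomEigenvector, hA.mulVec_eigenvectorBasis, dotProduct_smul,
    OrthonormalBasis.dotProduct_self, smul_eq_mul, mul_one]
  rfl

end BottomEigenvector

section Eigengap

variable {n : ℕ} {A : Matrix (Fin (n + 2)) (Fin (n + 2)) ℝ}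

lemma sortedEigs_one_le_eigenvalues (hA : A.IsHermitian) {i : Fin (n + 2)}
    (hi : i ≠ Tuple.sort hA.eigenvalues 0) : sortedEigs hA 1 ≤ hA.eigenvalues i := by
  have hi' : (Tuple.sort hA.eigenvalues).symm i ≠ 0 := by
    rintro h; exact hi (by rw [← h, Equiv.apply_symm_apply])
  calc sortedEigs hA 1 ≤ sortedEigs hA ((Tuple.sort hA.eigenvalues).symm i) :=
        Tuple.monotone_sort _ (Fin.one_le_of_ne_zero hi')
    _ = hA.eigenvalues i := by simp [sortedEigs]

lemma eigengap_le_tinner (hA : A.IsHermitian) {X : Matrix (Fin (n + 2)) (Fin (n + 2)) ℝ}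
    (hX : X ∈ Spectra (n + 2)) :
    sortedEigs hA 0 + (sortedEigs hA 1 - sortedEigs hA 0) *
      (1 - bottomEigenvector hA ⬝ᵥ X *ᵥ bottomEigenvector hA) ≤ tinner A X := by
  set b := hA.eigenvectorBasis
  rw [tinner_eq_sum_eigenvalues_mul hA]
  exact add_mul_one_sub_le_sum_mul (μ := hA.eigenvalues)
    (δ := sortedEigs hA 1 - sortedEigs hA 0) (p := fun i => ⇑(b i) ⬝ᵥ X *ᵥ ⇑(b i))
    (fun i => by simpa using hX.1.dotProduct_mulVec_nonneg (b i))
    (by rw [← trace_eq_sum_dotProduct_mulVec b X, hX.2])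
    (fun i hi => by simpa [sortedEigs] using sortedEigs_one_le_eigenvalues hA hi)

end Eigengap

section Minimizer

variable {n : ℕ} {A Xs : Matrix (Fin (n + 2)) (Fin (n + 2)) ℝ}

lemma eq_vecMulVec_bottomEigenvector (hA : A.IsHermitian)
    (hgap : 0 < sortedEigs hA 1 - sortedEigs hA 0) (hXs : Xs ∈ Spectra (n + 2))
    (hfoc : ∀ Y ∈ Spectra (n + 2), 0 ≤ tinner A (Y - Xs)) :
    Xs = vecMulVec (bottomEigenvector hA) (bottomEigenvector hA) := by
  set w := bottomEigenvector hA
  have hw := bottomEigenvector_dotProduct_self hA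
  have hle : tinner A Xs ≤ sortedEigs hA 0 := by
    have := hfoc _ (vecMulVec_mem_spectra hw)
    rw [tinner_sub_right, tinner_vecMulVec_bottomEigenvector] at this
    linarith
  have hq : 1 - w ⬝ᵥ Xs *ᵥ w ≤ 0 :=
    nonpos_of_mul_nonpos_right (by linarith [eigengap_le_tinner hA hXs]) hgap
  have hF : frobSq (vecMulVec w w - Xs) = 0 :=
    le_antisymm (by linarith [frobSq_vecMulVec_sub_le hXs hw]) (frobSq_nonneg _)
  exact (sub_eq_zero.mp (frobSq_eq_zero_iff.mp hF)).symm

lemma half_eigengap_mul_frobSq_le_tinner (hA : A.IsHermitian)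
    (hgap : 0 < sortedEigs hA 1 - sortedEigs hA 0) (hXs : Xs ∈ Spectra (n + 2))
    (hfoc : ∀ Y ∈ Spectra (n + 2), 0 ≤ tinner A (Y - Xs))
    {X : Matrix (Fin (n + 2)) (Fin (n + 2)) ℝ} (hX : X ∈ Spectra (n + 2)) :
    (sortedEigs hA 1 - sortedEigs hA 0) / 2 * frobSq (Xs - X) ≤ tinner A (X - Xs) := by
  rw [eq_vecMulVec_bottomEigenvector hA hgap hXs hfoc, tinner_sub_right,
    tinner_vecMulVec_bottomEigenvector]
  have hF := frobSq_vecMulVec_sub_le hX (bottomEigenvector_dotProduct_self hA)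
  nlinarith [eigengap_le_tinner hA hX]

end Minimizer

section FirstOrder

variable {E : Type*} [AddCommGroup E] [Module ℝ E] {f : E → ℝ} {x y : E} {d : ℝ}

lemma ConvexOn.le_sub_of_hasDerivAt_line (hf : ConvexOn ℝ Set.univ f)
    (hd : HasDerivAt (fun t : ℝ => f (x + t • (y - x))) d 0) : d ≤ f y - f x := by
  have hline : ConvexOn ℝ Set.univ (fun t : ℝ => f (x + t • (y - x))) := by
    simpa [Function.comp_def, AffineMap.lineMap_apply, add_comm] using
      hf.comp_affineMap (AffineMap.lineMap x y)
  simpa [slope_def_field] using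
    hline.le_slope_of_hasDerivAt (Set.mem_univ 0) (Set.mem_univ 1) one_pos hd

lemma IsMinOn.nonneg_of_hasDerivAt_line {S : Set E} (hS : Convex ℝ S) (hmin : IsMinOn f S x)
    (hx : x ∈ S) (hy : y ∈ S) (hd : HasDerivAt (fun t : ℝ => f (x + t • (y - x))) d 0) :
    0 ≤ d := by
  have hline : IsMinOn (fun t : ℝ => f (x + t • (y - x))) (Set.Icc 0 1) 0 := fun t ht => by
    simpa using hmin (hS.add_smul_sub_mem hx hy ht)
  have hcone : (1 : ℝ) ∈ posTangentConeAt (Set.Icc (0 : ℝ) 1) 0 :=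
    mem_posTangentConeAt_of_segment_subset (by simp [segment_eq_Icc])
  simpa using hline.localize.hasFDerivWithinAt_nonneg hd.hasFDerivAt.hasFDerivWithinAt hcone

end FirstOrder

lemma regularized_step_le {n : ℕ} {f : Matrix (Fin n) (Fin n) ℝ → ℝ}
    {G X V Y : Matrix (Fin n) (Fin n) ℝ} {β η : ℝ} (hη : 0 ≤ η)
    (hsmooth : ∀ Z, f Z ≤ f X + tinner G (Z - X) + β / 2 * frobSq (Z - X))
    (hV : tinner V G + η * β / 2 * frobSq (V - X) ≤ tinner Y G + η * β / 2 * frobSq (Y - X)) :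
    f ((1 - η) • X + η • V) ≤ f X + η * (tinner G (Y - X) + η * β / 2 * frobSq (Y - X)) := by
  have hstep : (1 - η) • X + η • V - X = η • (V - X) := by module
  have hsm := hsmooth ((1 - η) • X + η • V)
  rw [hstep, tinner_smul_right, frobSq_smul] at hsm
  rw [tinner_comm V, tinner_comm Y] at hV
  rw [tinner_sub_right] at hsm ⊢
  nlinarith [mul_le_mul_of_nonneg_left hV hη]

theorem stmt8_general {n : ℕ} (f : Matrix (Fin (n+2)) (Fin (n+2)) ℝ → ℝ)
    (Gf : Matrix (Fin (n+2)) (Fin (n+2)) ℝ → Matrix (Fin (n+2)) (Fin (n+2)) ℝ)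
    (β : ℝ) (hβ : 0 < β)
    (hconv : ConvexOn ℝ Set.univ f)
    (hdiff : ∀ X H, HasDerivAt (fun t : ℝ => f (X + t • H)) (tinner (Gf X) H) 0)
    (hsmooth : ∀ X Y, f Y ≤ f X + tinner (Gf X) (Y - X) + β / 2 * frobSq (Y - X))
    (Xs : Matrix (Fin (n+2)) (Fin (n+2)) ℝ) (hXs : Xs ∈ Spectra (n+2))
    (hopt : ∀ X ∈ Spectra (n+2), f Xs ≤ f X)
    (hG : (Gf Xs).IsHermitian)
    (δ : ℝ) (hδ : δ = sortedEigs hG 1 - sortedEigs hG 0) (hδpos : 0 < δ)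
    (δh : ℝ) (hδh : 0 < δh) (hδhδ : δh ≤ δ)
    (η : ℝ) (hη : η = δh / (2 * β))
    (Xt : Matrix (Fin (n+2)) (Fin (n+2)) ℝ) (hXt : Xt ∈ Spectra (n+2))
    (v : Fin (n+2) → ℝ)
    (hvmin : ∀ u : Fin (n+2) → ℝ, (∑ i, (u i)^2 = 1) →
      tinner (vecMulVec v v) (Gf Xt) + η * β / 2 * frobSq (vecMulVec v v - Xt) ≤
      tinner (vecMulVec u u) (Gf Xt) + η * β / 2 * frobSq (vecMulVec u u - Xt)) :
    f ((1 - η) • Xt + η • vecMulVec v v) - f Xs ≤ (1 - δh / (4 * β)) * (f Xt - f Xs) := by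
  subst hδ
  have hgrad : ∀ X Y, tinner (Gf X) (Y - X) ≤ f Y - f X := fun X Y =>
    hconv.le_sub_of_hasDerivAt_line (hdiff X (Y - X))
  have hfoc : ∀ Y ∈ Spectra (n + 2), 0 ≤ tinner (Gf Xs) (Y - Xs) := fun Y hY =>
    IsMinOn.nonneg_of_hasDerivAt_line convex_spectra hopt hXs hY (hdiff Xs (Y - Xs))
  have hgrowth : (sortedEigs hG 1 - sortedEigs hG 0) / 2 * frobSq (Xs - Xt) ≤ f Xt - f Xs :=
    (half_eigengap_mul_frobSq_le_tinner hG hδpos hXs hfoc hXt).trans (hgrad Xs Xt)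
  have hw : ∑ i, bottomEigenvector hG i ^ 2 = 1 := by
    simpa [dotProduct, sq] using bottomEigenvector_dotProduct_self hG
  have hη0 : 0 ≤ η := by rw [hη]; positivity
  have hvXs := hvmin _ hw
  rw [← eq_vecMulVec_bottomEigenvector hG hδpos hXs hfoc] at hvXs
  have hstep := regularized_step_le hη0 (hsmooth Xt) hvXs
  have hηβ : η * β = δh / 2 := by rw [hη]; field_simp
  have hbracket :
      tinner (Gf Xt) (Xs - Xt) + η * β / 2 * frobSq (Xs - Xt) ≤ -(f Xt - f Xs) / 2 := by
    rw [hηβ]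
    nlinarith [hgrad Xt Xs, frobSq_nonneg (Xs - Xt)]
  have hcoef : δh / (4 * β) = η / 2 := by rw [hη]; field_simp; ring
  rw [hcoef]
  nlinarith [mul_le_mul_of_nonneg_left hbracket hη0]

/-- One step of regularized Frank–Wolfe with step `η = δ̂/(2β)`, `0 < δ̂ ≤ δ`,
contracts the optimality gap by a factor `1 − δ̂/(4β)`, under the eigen-gap assumption. -/
theorem stmt8 {n : ℕ} (f : Matrix (Fin (n+2)) (Fin (n+2)) ℝ → ℝ)
    (Gf : Matrix (Fin (n+2)) (Fin (n+2)) ℝ → Matrix (Fin (n+2)) (Fin (n+2)) ℝ)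
    (β : ℝ) (hβ : 0 < β)
    (hconv : ConvexOn ℝ Set.univ f)
    (hdiff : ∀ X H, HasDerivAt (fun t : ℝ => f (X + t • H)) (tinner (Gf X) H) 0)
    (hsmooth : ∀ X Y, f Y ≤ f X + tinner (Gf X) (Y - X) + β / 2 * frobSq (Y - X))
    (Xs : Matrix (Fin (n+2)) (Fin (n+2)) ℝ) (hXs : Xs ∈ Spectra (n+2))
    (hopt : ∀ X ∈ Spectra (n+2), f Xs ≤ f X)
    (hG : (Gf Xs).IsHermitian)
    (δ : ℝ) (hδ : δ = sortedEigs hG 1 - sortedEigs hG 0) (hδpos : 0 < δ)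
    (δh : ℝ) (hδh : 0 < δh) (hδhδ : δh ≤ δ)
    (η : ℝ) (hη : η = δh / (2 * β))
    (Xt : Matrix (Fin (n+2)) (Fin (n+2)) ℝ) (hXt : Xt ∈ Spectra (n+2))
    (v : Fin (n+2) → ℝ) (hv : ∑ i, (v i)^2 = 1)
    (hvmin : ∀ u : Fin (n+2) → ℝ, (∑ i, (u i)^2 = 1) →
      tinner (vecMulVec v v) (Gf Xt) + η * β / 2 * frobSq (vecMulVec v v - Xt) ≤
      tinner (vecMulVec u u) (Gf Xt) + η * β / 2 * frobSq (vecMulVec u u - Xt)) :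
    f ((1 - η) • Xt + η • vecMulVec v v) - f Xs ≤ (1 - δh / (4 * β)) * (f Xt - f Xs) :=
  stmt8_general f Gf β hβ hconv hdiff hsmooth Xs hXs hopt hG δ hδ hδpos δh hδh hδhδ η hη Xt hXt v
    hvmin
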